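/- Let Φ be a metric space equipped with its Borel σ-algebra and let σ be a probability measure on Φ. Let R : Φ → ℝ be Lipschitz continuous with constant K > 0, and let φ* ∈ Φ satisfy R(φ*) ≤ R(φ) for all φ ∈ Φ. Let ε > 0 and L_σ > 0 satisfy σ(B̄(φ*, ε/K)) ≥ L_σ · (ε/K) and L_σ · ε / K < 1. Let δ ∈ (0, 1) and let m be a natural number with m ≥ log(δ) / log(1 − L_σ · ε / K). Then the m-fold product measure σ^m assigns outer measure at most δ to the bad event {(φ₁, …, φ_m) ∈ Φ^m : R(φ_i) > R(φ*) + ε for every i}; equivalently, with probability at least 1 − δ over m i.i.d. draws φ₁, …, φ_m from σ, the approximation error of the best sampled adversary on the inner optimization problem satisfies min_{1 ≤ i ≤ m} R(φ_i) − R(φ*) ≤ ε. -/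

import Mathlib

/-!
A sample whose reward exceeds the optimum by more than ε lies, by the Lipschitz bound, outside
B̄(φ*, ε/K), a set of σ-mass at most 1 - L_σ ε/K. By independence the bad event has mass at most
(1 - L_σ ε/K)^m, and the choice of m makes this at most δ.
-/

open MeasureTheory Metric Set

lemma LipschitzWith.le_add_mul_of_mem_closedBall {α : Type*} [PseudoMetricSpace α]
    {K : NNReal} {f : α → ℝ} (hf : LipschitzWith K f) {x₀ x : α} {r : ℝ}
    (hx : x ∈ closedBall x₀ r) : f x ≤ f x₀ + K * r := by
  have hdist : dist (f x) (f x₀) ≤ K * r :=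
    (hf.dist_le_mul x x₀).trans (mul_le_mul_of_nonneg_left hx K.coe_nonneg)
  rw [Real.dist_eq] at hdist
  linarith [le_abs_self (f x - f x₀)]

lemma MeasureTheory.Measure.pi_univ_pi_const {ι Ω : Type*} [Fintype ι] [MeasurableSpace Ω]
    (μ : Measure Ω) [SigmaFinite μ] (t : Set Ω) :
    Measure.pi (fun _ : ι => μ) (univ.pi fun _ => t) = μ t ^ Fintype.card ι := by
  rw [Measure.pi_pi, Finset.prod_const, Finset.card_univ]

lemma pow_le_of_log_div_log_le {a δ : ℝ} {m : ℕ} (ha₀ : 0 < a) (ha₁ : a < 1) (hδ : 0 < δ)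
    (hm : Real.log δ / Real.log a ≤ m) : a ^ m ≤ δ :=
  (Real.pow_le_iff_le_log ha₀ hδ).2 ((div_le_iff_of_neg (Real.log_neg ha₀ ha₁)).1 hm)

theorem herd_approx_error_le_eps_whp_general {Φ : Type*} [MetricSpace Φ] [MeasurableSpace Φ]
    [BorelSpace Φ] (σ : Measure Φ) [IsProbabilityMeasure σ]
    (R : Φ → ℝ) (K : ℝ) (hK : 0 < K) (hLip : LipschitzWith ⟨K, hK.le⟩ R)
    (φstar : Φ)
    (ε : ℝ) (hε : 0 < ε) (Lσ : ℝ) (hLσ : 0 < Lσ)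
    (hball : ENNReal.ofReal (Lσ * (ε / K)) ≤ σ (Metric.closedBall φstar (ε / K)))
    (hlt : Lσ * ε / K < 1)
    (δ : ℝ) (hδ : 0 < δ)
    (m : ℕ) (hm : Real.log δ / Real.log (1 - Lσ * ε / K) ≤ (m : ℝ)) :
    (Measure.pi fun _ : Fin m => σ) {t : Fin m → Φ | ∀ i, R φstar + ε < R (t i)} ≤
      ENNReal.ofReal δ := by
  set q := Lσ * ε / K
  have hq : 0 < q := by positivity
  have hbad : {t : Fin m → Φ | ∀ i, R φstar + ε < R (t i)} ⊆
      univ.pi fun _ => (closedBall φstar (ε / K))ᶜ := by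
    intro t ht i _ hti
    have hle : R (t i) ≤ R φstar + K * (ε / K) := hLip.le_add_mul_of_mem_closedBall hti
    rw [mul_div_cancel₀ ε hK.ne'] at hle
    exact (ht i).not_ge hle
  have hfar : σ (closedBall φstar (ε / K))ᶜ ≤ ENNReal.ofReal (1 - q) := by
    rw [ENNReal.ofReal_sub 1 hq.le, ENNReal.ofReal_one]
    exact prob_compl_le_one_sub_of_le_prob (by rwa [← mul_div_assoc] at hball)
      measurableSet_closedBall
  calc _ ≤ σ (closedBall φstar (ε / K))ᶜ ^ m := by
        simpa only [Measure.pi_univ_pi_const, Fintype.card_fin] using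
          measure_mono (μ := Measure.pi fun _ : Fin m => σ) hbad
    _ ≤ ENNReal.ofReal (1 - q) ^ m := by gcongr
    _ = ENNReal.ofReal ((1 - q) ^ m) := (ENNReal.ofReal_pow (by linarith) m).symm
    _ ≤ ENNReal.ofReal δ :=
        ENNReal.ofReal_le_ofReal (pow_le_of_log_div_log_le (by linarith) (by linarith) hδ hm)

/-- Theorem 2 of the paper: if R is K-Lipschitz with global minimizer φ*, σ satisfies the
density condition σ(B̄(φ*, ε/K)) ≥ L_σ·(ε/K), and m ≥ log(δ)/log(1 - L_σ·ε/K), then the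
bad event that every one of m i.i.d. sampled adversaries has reward more than ε above the
optimum has (outer) measure at most δ under the product measure σ^m. -/
theorem herd_approx_error_le_eps_whp {Φ : Type*} [MetricSpace Φ] [MeasurableSpace Φ]
    [BorelSpace Φ] (σ : Measure Φ) [IsProbabilityMeasure σ]
    (R : Φ → ℝ) (K : ℝ) (hK : 0 < K) (hLip : LipschitzWith ⟨K, hK.le⟩ R)
    (φstar : Φ) (hstar : ∀ φ : Φ, R φstar ≤ R φ)
    (ε : ℝ) (hε : 0 < ε) (Lσ : ℝ) (hLσ : 0 < Lσ)
    (hball : ENNReal.ofReal (Lσ * (ε / K)) ≤ σ (Metric.closedBall φstar (ε / K)))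
    (hlt : Lσ * ε / K < 1)
    (δ : ℝ) (hδ : 0 < δ) (hδ1 : δ < 1)
    (m : ℕ) (hm : Real.log δ / Real.log (1 - Lσ * ε / K) ≤ (m : ℝ)) :
    (Measure.pi fun _ : Fin m => σ) {t : Fin m → Φ | ∀ i, R φstar + ε < R (t i)} ≤
      ENNReal.ofReal δ :=
  herd_approx_error_le_eps_whp_general σ R K hK hLip φstar ε hε Lσ hLσ hball hlt δ hδ m hm
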